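/- Let E be a quantum channel from matrices on ℂ^{d₁} ⊗ ℂ^{d₂} to matrices on ℂ^{d₁} satisfying Δ ∘ E ∘ Δ = Δ ∘ E. Suppose there exist a quantum state τ on ℂ^{d₂} and a unitary U on ℂ^{d₁} such that E(ρ ⊗ τ) = U ρ U† for every quantum state ρ on ℂ^{d₁}. Then U is incoherent. In particular, no such channel E together with any ancilla state τ can implement a coherent unitary exactly. -/

import Mathlib

open Matrix Complex
open scoped Kronecker Classical ComplexOrder

noncomputable section

/-- A matrix is *incoherent* (w.r.t. the computational basis) if it has the form
`Σ_x e^{iθ_x} |π(x)⟩⟨x|` for a permutation `π` and real phases `θ`. -/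
def IsIncoherent {d : Type*} [Fintype d] [DecidableEq d] (U : Matrix d d ℂ) : Prop :=
  ∃ (π : Equiv.Perm d) (θ : d → ℝ),
    U = Matrix.of fun i j => if i = π j then Complex.exp ((θ j : ℂ) * Complex.I) else 0

/-- The dephasing map `Δ`, zeroing all off-diagonal entries. -/
def dephase {d : Type*} [DecidableEq d] (ρ : Matrix d d ℂ) : Matrix d d ℂ :=
  Matrix.of fun i j => if i = j then ρ i j else 0

/-- Partial trace over the second tensor factor. -/
def ptrace2 {α β : Type*} [Fintype β] (A : Matrix (α × β) (α × β) ℂ) : Matrix α α ℂ :=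
  Matrix.of fun i i' => ∑ j, A (i, j) (i', j)

/-- Partial trace over the first tensor factor. -/
def ptrace1 {α β : Type*} [Fintype α] (A : Matrix (α × β) (α × β) ℂ) : Matrix β β ℂ :=
  Matrix.of fun j j' => ∑ i, A (i, j) (i, j')

/-- A quantum state: positive semidefinite matrix of trace one. -/
def IsState {d : Type*} [Fintype d] (ρ : Matrix d d ℂ) : Prop :=
  ρ.PosSemidef ∧ ρ.trace = 1

/-- The Choi matrix of a linear map between matrix algebras. -/
def choiMatrix {a b : Type*} [Fintype a] [DecidableEq a] [Fintype b]
    (E : Matrix a a ℂ →ₗ[ℂ] Matrix b b ℂ) : Matrix (a × b) (a × b) ℂ :=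
  Matrix.of fun p q => E (Matrix.single p.1 q.1 1) p.2 q.2

/-- A quantum channel: completely positive (PSD Choi matrix) trace-preserving linear map. -/
def IsChannel {a b : Type*} [Fintype a] [DecidableEq a] [Fintype b] [DecidableEq b]
    (E : Matrix a a ℂ →ₗ[ℂ] Matrix b b ℂ) : Prop :=
  (choiMatrix E).PosSemidef ∧ ∀ ρ, (E ρ).trace = ρ.trace

/-- The trace norm `‖M‖₁ = Tr √(M†M)`. -/
def traceNorm {d : Type*} [Fintype d] [DecidableEq d] (M : Matrix d d ℂ) : ℝ :=
  ((((Matrix.posSemidef_conjTranspose_mul_self M).1.eigenvectorUnitary : Matrix d d ℂ) *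
      Matrix.diagonal (((↑) : ℝ → ℂ) ∘ (√·) ∘ (Matrix.posSemidef_conjTranspose_mul_self M).1.eigenvalues) *
      (star (Matrix.posSemidef_conjTranspose_mul_self M).1.eigenvectorUnitary : Matrix d d ℂ)).trace).re

/-- The trace distance `D(ρ,σ) = ½‖ρ−σ‖₁`. -/
def traceDist {d : Type*} [Fintype d] [DecidableEq d] (ρ σ : Matrix d d ℂ) : ℝ :=
  traceNorm (ρ - σ) / 2

/-- The coherence rank of a vector: the number of nonzero coordinates. -/
def cohRank {d : Type*} [Fintype d] (ψ : d → ℂ) : ℕ :=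
  (Finset.univ.filter fun x => ψ x ≠ 0).card

/-- The Hadamard gate. -/
def Hmat : Matrix (Fin 2) (Fin 2) ℂ :=
  Matrix.of fun a b => (((Real.sqrt 2)⁻¹ : ℝ) : ℂ) * (if a = 1 ∧ b = 1 then -1 else 1)

/-- `H^{⊗n}`, the n-fold Kronecker power of the Hadamard gate. -/
def Hpow (n : ℕ) : Matrix (Fin n → Fin 2) (Fin n → Fin 2) ℂ :=
  Matrix.of fun i j => ∏ q, Hmat (i q) (j q)

/-- A generalized controlled-Hadamard on qubits indexed by `I`: for some target qubit `t`
and set `S` of configurations of the other qubits, apply `H` on qubit `t` controlled on the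
other qubits being in `S`. -/
def IsCtrlHadamard {I : Type*} [Fintype I] [DecidableEq I]
    (V : Matrix (I → Fin 2) (I → Fin 2) ℂ) : Prop :=
  ∃ (t : I) (S : Finset ({i : I // i ≠ t} → Fin 2)),
    V = Matrix.of fun a b =>
      if (fun i : {i : I // i ≠ t} => b i.1) ∈ S then
        (if ∀ i, i ≠ t → a i = b i then Hmat (a t) (b t) else 0)
      else (if a = b then (1 : ℂ) else 0)

/-- The alternating product `U_k * V_k * ⋯ * U_1 * V_1 * U_0`. -/
def altProd {X : Type*} [Monoid X] : (k : ℕ) → (Fin (k + 1) → X) → (Fin k → X) → X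
  | 0, Us, _ => Us 0
  | (k + 1), Us, Vs =>
      Us (Fin.last (k + 1)) * Vs (Fin.last k) *
        altProd k (fun i => Us i.castSucc) (fun i => Vs i.castSucc)


section MyAux

variable {d : Type*} [Fintype d] [DecidableEq d]

omit [Fintype d] in
lemma myDephase_eq_diagonal (ρ : Matrix d d ℂ) : dephase ρ = Matrix.diagonal ρ.diag := by
  ext i j
  by_cases h : i = j <;> simp [dephase, Matrix.diagonal_apply, Matrix.diag, h]

omit [Fintype d] in
lemma myDephase_dephase (ρ : Matrix d d ℂ) : dephase (dephase ρ) = dephase ρ := by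
  ext i j; by_cases h : i = j <;> simp [dephase, h]

omit [Fintype d] in
lemma myDephase_kron {d₂ : Type*} [Fintype d₂] [DecidableEq d₂]
    (A : Matrix d d ℂ) (B : Matrix d₂ d₂ ℂ) :
    dephase (A ⊗ₖ B) = dephase A ⊗ₖ dephase B := by
  ext ⟨i, j⟩ ⟨i', j'⟩
  by_cases h1 : i = i' <;> by_cases h2 : j = j' <;>
    simp [dephase, Prod.ext_iff, h1, h2]

omit [DecidableEq d] in
lemma myPosSemidef_vecMulVec (ψ : d → ℂ) : (Matrix.vecMulVec ψ (star ψ)).PosSemidef := by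
  rw [Matrix.posSemidef_iff_dotProduct_mulVec]
  constructor
  · ext i j
    simp [Matrix.vecMulVec_apply, Matrix.conjTranspose_apply, mul_comm]
  · intro x
    have h : (Matrix.vecMulVec ψ (star ψ)) *ᵥ x = fun i => ψ i * (star ψ ⬝ᵥ x) := by
      ext i
      simp [Matrix.mulVec, dotProduct, Matrix.vecMulVec_apply, Finset.mul_sum, mul_assoc]
    rw [h]
    have h2 : dotProduct (star x) (fun i => ψ i * (star ψ ⬝ᵥ x))
        = star (star ψ ⬝ᵥ x) * (star ψ ⬝ᵥ x) := by
      simp only [dotProduct, Pi.star_apply, star_sum, star_mul', star_star,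
        Finset.sum_mul]
      refine Finset.sum_congr rfl fun i _ => by ring
    rw [h2]
    exact star_mul_self_nonneg _

lemma myIsState_dephase {ρ : Matrix d d ℂ} (h : IsState ρ) : IsState (dephase ρ) := by
  refine ⟨?_, ?_⟩
  · rw [myDephase_eq_diagonal]
    refine Matrix.PosSemidef.diagonal fun i => ?_
    have := h.1.dotProduct_mulVec_nonneg (Pi.single i 1)
    simpa [dotProduct, Matrix.mulVec, Pi.single_apply, Matrix.diag] using this
  · rw [← h.2]
    simp [Matrix.trace, dephase, Matrix.diag]

lemma myEntry_vecMulVec (U : Matrix d d ℂ) (ψ : d → ℂ) (i : d) :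
    (U * Matrix.vecMulVec ψ (star ψ) * Uᴴ) i i
      = (∑ j, U i j * ψ j) * star (∑ j, U i j * ψ j) := by
  simp only [Matrix.mul_apply, Matrix.vecMulVec_apply, Matrix.conjTranspose_apply,
    Pi.star_apply, star_sum, star_mul', Finset.sum_mul, Finset.mul_sum]
  refine Finset.sum_congr rfl fun k _ => Finset.sum_congr rfl fun j _ => by ring

lemma myEntry_dephase (U : Matrix d d ℂ) (ρ : Matrix d d ℂ) (i : d) :
    (U * dephase ρ * Uᴴ) i i = ∑ j, U i j * ρ j j * star (U i j) := by
  simp only [Matrix.mul_apply, dephase, Matrix.of_apply, Matrix.conjTranspose_apply,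
    mul_ite, ite_mul, mul_zero, zero_mul, Finset.sum_ite_eq', Finset.mem_univ, if_true,
    Finset.sum_mul]

lemma myExpArg (z : ℂ) (h : star z * z = 1) : Complex.exp ((Complex.arg z : ℂ) * Complex.I) = z := by
  have habs : ‖z‖ = 1 := by
    have hn : Complex.normSq z = 1 := by
      have h2 := h
      rw [Complex.star_def, mul_comm, Complex.mul_conj] at h2
      exact_mod_cast h2
    rw [← Complex.sq_norm] at hn
    nlinarith [norm_nonneg z]
  have h3 := Complex.norm_mul_exp_arg_mul_I z
  rw [habs] at h3
  simpa using h3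

end MyAux

/-- If a channel `E` satisfies `Δ ∘ E ∘ Δ = Δ ∘ E`, and `E(ρ ⊗ τ) = U ρ U†`
for all states `ρ` (for some state `τ` and unitary `U`), then `U` is incoherent. -/
theorem dephasing_condition_no_coherent_unitary
    (d₁ d₂ : ℕ)
    (E : Matrix (Fin d₁ × Fin d₂) (Fin d₁ × Fin d₂) ℂ →ₗ[ℂ] Matrix (Fin d₁) (Fin d₁) ℂ)
    (hE : IsChannel E)
    (hcomm : ∀ ρ, dephase (E (dephase ρ)) = dephase (E ρ))
    (τ : Matrix (Fin d₂) (Fin d₂) ℂ) (hτ : IsState τ)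
    (U : Matrix (Fin d₁) (Fin d₁) ℂ) (hU : U ∈ Matrix.unitaryGroup (Fin d₁) ℂ)
    (himpl : ∀ ρ, IsState ρ → E (ρ ⊗ₖ τ) = U * ρ * Uᴴ) :
    IsIncoherent U := by
  classical
  -- Step A: dephasing of U ρ U† only depends on the diagonal of ρ
  have keyA : ∀ ρ : Matrix (Fin d₁) (Fin d₁) ℂ, IsState ρ →
      dephase (U * ρ * Uᴴ) = dephase (U * dephase ρ * Uᴴ) := by
    intro ρ hρ
    have h1 := himpl ρ hρ
    have h2 := himpl (dephase ρ) (myIsState_dephase hρ)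
    have e1 : dephase (E (ρ ⊗ₖ τ)) = dephase (E (dephase ρ ⊗ₖ dephase τ)) := by
      rw [← hcomm (ρ ⊗ₖ τ), myDephase_kron]
    have e2 : dephase (E (dephase ρ ⊗ₖ τ)) = dephase (E (dephase ρ ⊗ₖ dephase τ)) := by
      rw [← hcomm (dephase ρ ⊗ₖ τ), myDephase_kron, myDephase_dephase]
    rw [h1] at e1
    rw [h2] at e2
    exact e1.trans e2.symm
  -- Step B: cross terms vanish for any normalized superposition
  have key : ∀ a b : ℂ, a * star a + b * star b = 1 → ∀ x y : Fin d₁, x ≠ y → ∀ i : Fin d₁,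
      U i x * (a * star b) * star (U i y) + U i y * (b * star a) * star (U i x) = 0 := by
    intro a b htr x y hxy i
    set ψ : Fin d₁ → ℂ := fun j => a * (if j = x then 1 else 0) + b * (if j = y then 1 else 0)
      with hψdef
    have hψ2 : ∀ j, ψ j * star (ψ j)
        = (a * star a) * (if j = x then 1 else 0) + (b * star b) * (if j = y then 1 else 0) := by
      intro j
      rcases eq_or_ne j x with h1 | h1 <;> rcases eq_or_ne j y with h2 | h2
      · exact absurd (h1.symm.trans h2) hxy
      all_goals (simp [hψdef, h1, h2, hxy, Ne.symm hxy]; try ring)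
    have hstate : IsState (Matrix.vecMulVec ψ (star ψ)) := by
      refine ⟨myPosSemidef_vecMulVec ψ, ?_⟩
      rw [← htr]
      simp only [Matrix.trace, Matrix.diag, Matrix.vecMulVec_apply, Pi.star_apply, hψ2,
        Finset.sum_add_distrib, mul_ite, mul_one, mul_zero, ← Finset.sum_filter,
        Finset.filter_eq', Finset.mem_univ, if_true, Finset.sum_singleton]
    have hA := congrFun (congrFun (keyA _ hstate) i) i
    have hdl : ∀ M : Matrix (Fin d₁) (Fin d₁) ℂ, dephase M i i = M i i := fun M => by
      simp [dephase]
    rw [hdl, hdl, myEntry_vecMulVec, myEntry_dephase] at hA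
    have hsum1 : (∑ j, U i j * ψ j) = U i x * a + U i y * b := by
      simp only [hψdef, mul_add, mul_ite, mul_one, mul_zero, Finset.sum_add_distrib,
        ← Finset.sum_filter, Finset.filter_eq', Finset.mem_univ, if_true, Finset.sum_singleton]
    have hsum2 : (∑ j, U i j * (Matrix.vecMulVec ψ (star ψ)) j j * star (U i j))
        = U i x * (a * star a) * star (U i x) + U i y * (b * star b) * star (U i y) := by
      simp only [Matrix.vecMulVec_apply, Pi.star_apply, hψ2, mul_add, add_mul, mul_ite, ite_mul,
        mul_one, mul_zero, zero_mul, Finset.sum_add_distrib, ← Finset.sum_filter,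
        Finset.filter_eq', Finset.mem_univ, if_true, Finset.sum_singleton]
      try ring
    rw [hsum1, hsum2] at hA
    simp only [star_add, star_mul'] at hA
    linear_combination hA
  -- Step C: the off-diagonal products of each row vanish
  have hrow : ∀ (i x y : Fin d₁), x ≠ y → U i x * star (U i y) = 0 := by
    intro i x y hxy
    set r : ℂ := (((Real.sqrt 2)⁻¹ : ℝ) : ℂ) with hrdef
    have hs1 : star r = r := by rw [hrdef, Complex.star_def, Complex.conj_ofReal]
    have hrr : r * r = 1 / 2 := by
      rw [hrdef, ← Complex.ofReal_mul, ← mul_inv, Real.mul_self_sqrt (by norm_num)]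
      norm_num
    have hII : Complex.I * Complex.I = -1 := Complex.I_mul_I
    have hs2 : star (r * Complex.I) = -(r * Complex.I) := by
      rw [star_mul', hs1, Complex.star_def, Complex.conj_I]
      ring
    have htr1 : r * star r + r * star r = 1 := by
      rw [hs1]; linear_combination 2 * hrr
    have htr2 : r * star r + (r * Complex.I) * star (r * Complex.I) = 1 := by
      rw [hs1, hs2]; linear_combination 2 * hrr - (r * r) * hII
    have h1 := key r r htr1 x y hxy i
    have h2 := key r (r * Complex.I) htr2 x y hxy i
    rw [hs1] at h1
    rw [hs1, hs2] at h2
    have e1 : U i x * star (U i y) + U i y * star (U i x) = 0 := by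
      linear_combination 2 * h1 +
        (-2 * (U i x * star (U i y)) - 2 * (U i y * star (U i x))) * hrr
    have e2 : U i x * star (U i y) - U i y * star (U i x) = 0 := by
      linear_combination (2 * Complex.I) * h2 +
        (2 * (U i y * star (U i x)) - 2 * (U i x * star (U i y))) * hrr +
        (2 * r * r * (U i x * star (U i y)) - 2 * r * r * (U i y * star (U i x))) * hII
    linear_combination (1 / 2 : ℂ) * e1 + (1 / 2 : ℂ) * e2
  -- columns of a unitary are normalized
  have hcolsum : ∀ x : Fin d₁, ∑ i, star (U i x) * U i x = 1 := by
    intro x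
    have h := hU.1
    have := congrFun (congrFun h x) x
    simpa [Matrix.mul_apply, Matrix.one_apply, Matrix.conjTranspose_apply] using this
  have hcol : ∀ x : Fin d₁, ∃ i, U i x ≠ 0 := by
    intro x
    by_contra h
    push_neg at h
    have := hcolsum x
    simp only [h, mul_zero, Finset.sum_const_zero] at this
    exact zero_ne_one this
  -- the permutation
  set π0 : Fin d₁ → Fin d₁ := fun x => Classical.choose (hcol x) with hπ0def
  have hπ0 : ∀ x, U (π0 x) x ≠ 0 := fun x => Classical.choose_spec (hcol x)
  have hinj : Function.Injective π0 := by
    intro x y hxy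
    by_contra hne
    have := hrow (π0 x) x y hne
    rcases mul_eq_zero.mp this with h | h
    · exact hπ0 x h
    · rw [hxy] at h
      exact hπ0 y (star_eq_zero.mp h)
  have hbij : Function.Bijective π0 := Finite.injective_iff_bijective.mp hinj
  have hzero : ∀ (i : Fin d₁) (x : Fin d₁), i ≠ π0 x → U i x = 0 := by
    intro i x hne
    by_contra hUix
    obtain ⟨x', hx'⟩ := hbij.2 i
    have hxx' : x' ≠ x := by
      intro h
      exact hne (by rw [← h, hx'])
    have := hrow i x' x hxx'
    rcases mul_eq_zero.mp this with h | h
    · exact hπ0 x' (by rw [hx']; exact h)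
    · exact hUix (star_eq_zero.mp h)
  have hmod : ∀ x : Fin d₁, star (U (π0 x) x) * U (π0 x) x = 1 := by
    intro x
    have h := hcolsum x
    rw [Finset.sum_eq_single_of_mem (π0 x) (Finset.mem_univ _)
      (fun i _ hne => by rw [hzero i x hne]; simp)] at h
    exact h
  refine ⟨Equiv.ofBijective π0 hbij, fun x => Complex.arg (U (π0 x) x), ?_⟩
  ext i j
  rw [Matrix.of_apply]
  by_cases h : i = π0 j
  · have hπj : (Equiv.ofBijective π0 hbij) j = π0 j := rfl
    rw [hπj, if_pos h, h]
    exact (myExpArg _ (hmod j)).symm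
  · have hπj : (Equiv.ofBijective π0 hbij) j = π0 j := rfl
    rw [hπj, if_neg h]
    exact hzero i j h
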